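/- arXiv:2402.05955 — 2 statements merged into one kernel-verified Lean document; each statement's English description precedes it below -/
import Mathlib

section
/- If y* is a global optimal solution of minimizing S(y) over y ∈ Y_WE with y ∈ Q, and x* ∈ X satisfies F(x*) ≤ y* componentwise and F(x*) ∈ Q, then x* is a global optimal solution of minimizing S(F(x)) over x ∈ X_WE with F(x) ∈ Q. -/
/-- If y* is a global optimal solution of minimizing S(y) over y ∈ Y_WE
with y ∈ Q, and x* ∈ X satisfies F(x*) ≤ y* componentwise and F(x*) ∈ Q, then x* is a
global optimal solution of minimizing S(F(x)) over x ∈ X_WE with F(x) ∈ Q. -/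
theorem stmt1 {n m : ℕ} (X : Set (Fin n → ℝ)) (Q : Set (Fin m → ℝ))
    (F : (Fin n → ℝ) → (Fin m → ℝ)) (S : (Fin m → ℝ) → ℝ)
    (hX : X.Nonempty) (hXconv : Convex ℝ X) (hQconv : Convex ℝ Q)
    (hconv : ∀ i, ConvexOn ℝ X (fun x => F x i))
    (hbdd : ∀ i, BddBelow ((fun x => F x i) '' X))
    (hmono : ∀ y₁ y₂ : Fin m → ℝ, (∀ i, y₂ i < y₁ i) → S y₂ < S y₁)
    (hmono' : ∀ y₁ y₂ : Fin m → ℝ, y₂ ≤ y₁ → S y₂ ≤ S y₁)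
    (XWE : Set (Fin n → ℝ))
    (hXWE : XWE = {x ∈ X | ¬ ∃ x' ∈ X, ∀ i, F x' i < F x i})
    (YWE : Set (Fin m → ℝ)) (hYWE : YWE = F '' XWE)
    -- y* is a global optimal solution of (OSP)
    (ystar : Fin m → ℝ) (hyY : ystar ∈ YWE) (hyQ : ystar ∈ Q)
    (hopt : ∀ y ∈ YWE, y ∈ Q → S ystar ≤ S y)
    -- x* ∈ X with F(x*) ≤ y* and F(x*) ∈ Q
    (xstar : Fin n → ℝ) (hxX : xstar ∈ X) (hle : F xstar ≤ ystar) (hxQ : F xstar ∈ Q) :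
    xstar ∈ XWE ∧ ∀ x ∈ XWE, F x ∈ Q → S (F xstar) ≤ S (F x) := by
  obtain ⟨x₀, hx₀, hFx₀⟩ : ∃ x₀ ∈ XWE, F x₀ = ystar := by
    rw [hYWE] at hyY; exact hyY
  have hx₀we := hx₀
  rw [hXWE] at hx₀we
  constructor
  · rw [hXWE]
    refine ⟨hxX, ?_⟩
    rintro ⟨x', hx', hlt⟩
    exact hx₀we.2 ⟨x', hx', fun i => lt_of_lt_of_le (hlt i) (by rw [hFx₀]; exact hle i)⟩
  · intro x hx hxQ'
    calc S (F xstar) ≤ S ystar := hmono' _ _ hle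
      _ ≤ S (F x) := hopt _ (by rw [hYWE]; exact ⟨x, hx, rfl⟩) hxQ'
end

section
/- The boundary of Y⁺ equals the set of weakly Pareto points of Y⁺: ∂Y⁺ = Y⁺_WE. -/
open Pointwise


/-- ∂Y⁺ = Y⁺_WE : the topological boundary of Y⁺ = Y + ℝᵐ₊ equals the
set of weakly Pareto points of Y⁺, for Y nonempty compact. -/
theorem stmt4 {m : ℕ} (Y : Set (Fin m → ℝ)) (hY : Y.Nonempty) (hYcomp : IsCompact Y)
    (Yplus : Set (Fin m → ℝ)) (hYplus : Yplus = {y | ∃ q ∈ Y, q ≤ y}) :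
    frontier Yplus = {y ∈ Yplus | ¬ ∃ y' ∈ Yplus, ∀ i, y' i < y i} := by
  have hset : Yplus = Y + {x : Fin m → ℝ | 0 ≤ x} := by
    rw [hYplus]
    ext y
    constructor
    · rintro ⟨q, hq, hle⟩
      exact ⟨q, hq, y - q, by simpa [Pi.le_def, sub_nonneg] using fun i => hle i, by funext i; simp⟩
    · rintro ⟨q, hq, r, hr, rfl⟩
      exact ⟨q, hq, fun i => by simpa using hr i⟩
  have hclosed : IsClosed Yplus := by
    rw [hset]
    refine IsClosed.add_left_of_isCompact ?_ hYcomp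
    have : {x : Fin m → ℝ | 0 ≤ x} = ⋂ i, {x | 0 ≤ x i} := by
      ext x; simp [Pi.le_def]
    rw [this]
    exact isClosed_iInter fun i => isClosed_le continuous_const (continuous_apply i)
  have hint : ∀ y, y ∈ interior Yplus ↔ ∃ y' ∈ Yplus, ∀ i, y' i < y i := by
    intro y
    constructor
    · intro hy
      obtain ⟨ε, hε, hball⟩ := Metric.mem_nhds_iff.mp (mem_interior_iff_mem_nhds.mp hy)
      refine ⟨fun i => y i - ε / 2, hball ?_, fun i => by linarith⟩
      rw [Metric.mem_ball]
      refine lt_of_le_of_lt ((dist_pi_le_iff (by positivity)).2 (fun i => ?_)) (show ε/2 < ε by linarith)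
      simp [Real.dist_eq, abs_of_pos hε, abs_div]
    · rintro ⟨y', hy', hlt⟩
      rw [mem_interior]
      refine ⟨{z | ∀ i, y' i < z i}, fun z hz => ?_, ?_, hlt⟩
      · rw [hYplus] at hy' ⊢
        obtain ⟨q, hq, hle⟩ := hy'
        exact ⟨q, hq, fun i => (hle i).trans (hz i).le⟩
      · have : {z : Fin m → ℝ | ∀ i, y' i < z i} = ⋂ i, {z | y' i < z i} := by
          ext z; simp
        rw [this]
        exact isOpen_iInter_of_finite fun i =>
          isOpen_lt continuous_const (continuous_apply i)
  rw [hclosed.frontier_eq]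
  ext y
  simp only [Set.mem_diff, Set.mem_setOf_eq, hint y, Set.mem_sep_iff]
end
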